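/- Fix g ≥ 1. Let Γ be the group presented by generators α₁, …, α_g, β₁, …, β_g, J subject to the relations that J commutes with each αᵢ and each βᵢ, and that ∏_{i=1}^{g} [αᵢ, βᵢ] = J. Then the element J has infinite order in Γ; that is, the subgroup of Γ generated by J is isomorphic to ℤ. -/

import Mathlib

open scoped commutatorElement

/-- Generator `αᵢ` in the free group on `α₁, …, α_g, β₁, …, β_g, J`. -/
def SurfaceExt.a {g : ℕ} (i : Fin g) : FreeGroup (Fin g ⊕ Fin g ⊕ Unit) :=
  FreeGroup.of (Sum.inl i)

/-- Generator `βᵢ` in the free group on `α₁, …, α_g, β₁, …, β_g, J`. -/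
def SurfaceExt.b {g : ℕ} (i : Fin g) : FreeGroup (Fin g ⊕ Fin g ⊕ Unit) :=
  FreeGroup.of (Sum.inr (Sum.inl i))

/-- The central generator `J` in the free group on `α₁, …, α_g, β₁, …, β_g, J`. -/
def SurfaceExt.J {g : ℕ} : FreeGroup (Fin g ⊕ Fin g ⊕ Unit) :=
  FreeGroup.of (Sum.inr (Sum.inr ()))

/-- Relators of the Atiyah–Bott central extension `Γ`: `J` commutes with each `αᵢ`
and each `βᵢ`, and `∏ᵢ [αᵢ, βᵢ] = J` (expressed as `(∏ᵢ ⁅αᵢ, βᵢ⁆) * J⁻¹`). -/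
def SurfaceExt.rels (g : ℕ) : Set (FreeGroup (Fin g ⊕ Fin g ⊕ Unit)) :=
  (Set.range fun i : Fin g => ⁅SurfaceExt.J (g := g), SurfaceExt.a i⁆) ∪
  (Set.range fun i : Fin g => ⁅SurfaceExt.J (g := g), SurfaceExt.b i⁆) ∪
  {(List.ofFn fun i : Fin g => ⁅SurfaceExt.a i, SurfaceExt.b i⁆).prod * SurfaceExt.J⁻¹}

/-!
The integer Heisenberg group has elements `X`, `Y` whose commutator `Z` is central and of
infinite order. Sending `α₁ ↦ X`, `β₁ ↦ Y`, `J ↦ Z` and every other generator to `1` respects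
the relations of `Γ` (all other commutators `[αᵢ, βᵢ]` become trivial), so `J` maps to an element
of infinite order and has infinite order itself.
-/

/-- `⟨x, y, z⟩` is the unitriangular matrix `[[1, x, z], [0, 1, y], [0, 0, 1]]`. -/
@[ext]
structure Heisenberg where
  x : ℤ
  y : ℤ
  z : ℤ

namespace Heisenberg

instance : Mul Heisenberg := ⟨fun a b => ⟨a.x + b.x, a.y + b.y, a.z + b.z + a.x * b.y⟩⟩
instance : One Heisenberg := ⟨⟨0, 0, 0⟩⟩
instance : Inv Heisenberg := ⟨fun a => ⟨-a.x, -a.y, -a.z + a.x * a.y⟩⟩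

@[simp] lemma mul_x (a b : Heisenberg) : (a * b).x = a.x + b.x := rfl
@[simp] lemma mul_y (a b : Heisenberg) : (a * b).y = a.y + b.y := rfl
@[simp] lemma mul_z (a b : Heisenberg) : (a * b).z = a.z + b.z + a.x * b.y := rfl
@[simp] lemma one_x : (1 : Heisenberg).x = 0 := rfl
@[simp] lemma one_y : (1 : Heisenberg).y = 0 := rfl
@[simp] lemma one_z : (1 : Heisenberg).z = 0 := rfl
@[simp] lemma inv_x (a : Heisenberg) : a⁻¹.x = -a.x := rfl
@[simp] lemma inv_y (a : Heisenberg) : a⁻¹.y = -a.y := rfl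
@[simp] lemma inv_z (a : Heisenberg) : a⁻¹.z = -a.z + a.x * a.y := rfl

instance : Group Heisenberg where
  mul_assoc a b c := by ext <;> simp <;> ring
  one_mul a := by ext <;> simp
  mul_one a := by ext <;> simp
  inv_mul_cancel a := by ext <;> simp

def X : Heisenberg := ⟨1, 0, 0⟩
def Y : Heisenberg := ⟨0, 1, 0⟩
def Z : Heisenberg := ⟨0, 0, 1⟩

lemma commutatorElement_X_Y : ⁅X, Y⁆ = Z := by
  ext <;> simp [commutatorElement_def, X, Y, Z]

lemma commute_Z (a : Heisenberg) : Commute Z a := by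
  ext <;> simp [Z, add_comm]

lemma Z_pow (n : ℕ) : Z ^ n = ⟨0, 0, n⟩ := by
  induction n with
  | zero => rfl
  | succ n ih => rw [pow_succ, ih]; ext <;> simp [Z]

lemma not_isOfFinOrder_Z : ¬ IsOfFinOrder Z := by
  rw [isOfFinOrder_iff_pow_eq_one]
  rintro ⟨n, hn, hZn⟩
  have := congrArg Heisenberg.z hZn
  simp only [Z_pow, one_z, Nat.cast_eq_zero] at this
  omega

end Heisenberg

namespace SurfaceExt

variable {G : Type*} [Group G] (k : ℕ) (x y : G)

def generatorImage : Fin (k + 1) ⊕ Fin (k + 1) ⊕ Unit → G :=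
  Sum.elim (Fin.cons x 1) (Sum.elim (Fin.cons y 1) fun _ => ⁅x, y⁆)

variable {k x y}

lemma lift_generatorImage_rels (hx : Commute ⁅x, y⁆ x) (hy : Commute ⁅x, y⁆ y) :
    ∀ r ∈ rels (k + 1), FreeGroup.lift (generatorImage k x y) r = 1 := by
  have commute_cons {w : G} (hw : Commute ⁅x, y⁆ w) (i : Fin (k + 1)) :
      Commute ⁅x, y⁆ ((Fin.cons w 1 : Fin (k + 1) → G) i) := by
    cases i using Fin.cases with
    | zero => exact hw
    | succ j => exact Commute.one_right _
  rintro r ((⟨i, rfl⟩ | ⟨i, rfl⟩) | rfl)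
  · simpa [commutatorElement_eq_one_iff_commute, J, a, generatorImage] using commute_cons hx i
  · simpa [commutatorElement_eq_one_iff_commute, J, b, generatorImage] using commute_cons hy i
  · simp [map_list_prod, List.map_ofFn, List.ofFn_succ, J, a, b, generatorImage, Function.comp_def,
      -commutatorElement_inv]

lemma not_isOfFinOrder_J_of_commutator (hx : Commute ⁅x, y⁆ x) (hy : Commute ⁅x, y⁆ y)
    (hxy : ¬ IsOfFinOrder ⁅x, y⁆) :
    ¬ IsOfFinOrder (PresentedGroup.of (Sum.inr (Sum.inr ())) : PresentedGroup (rels (k + 1))) :=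
  fun hJ => hxy <| by
    simpa [PresentedGroup.toGroup.of, generatorImage] using
      (PresentedGroup.toGroup (lift_generatorImage_rels hx hy)).isOfFinOrder hJ

end SurfaceExt

lemma nonempty_zpowers_mulEquiv_int {G : Type*} [Group G] {a : G} (ha : ¬ IsOfFinOrder a) :
    Nonempty (Subgroup.zpowers a ≃* Multiplicative ℤ) := by
  have hinj : Function.Injective (zpowersHom G a) :=
    (injective_zpow_iff_not_isOfFinOrder.mpr ha).comp Multiplicative.toAdd.injective
  exact ⟨((MonoidHom.ofInjective hinj).trans
    (MulEquiv.subgroupCongr (Subgroup.range_zpowersHom a))).symm⟩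

/-- **`J` has infinite order in `Γ`.** In the Atiyah–Bott central extension `Γ` of the
genus-`g` surface group, the element `J` is not of finite order; equivalently, the
subgroup it generates is infinite cyclic, i.e. isomorphic to `ℤ`. -/
theorem J_infinite_order_in_gamma (g : ℕ) (hg : 1 ≤ g) :
    ¬ IsOfFinOrder
        (PresentedGroup.of (Sum.inr (Sum.inr ())) : PresentedGroup (SurfaceExt.rels g)) ∧
    Nonempty
      ((Subgroup.zpowers
          (PresentedGroup.of (Sum.inr (Sum.inr ())) : PresentedGroup (SurfaceExt.rels g)))
        ≃* Multiplicative ℤ) := by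
  obtain ⟨k, rfl⟩ : ∃ k, g = k + 1 := Nat.exists_eq_add_of_le' hg
  have hJ := SurfaceExt.not_isOfFinOrder_J_of_commutator (k := k)
    (Heisenberg.commutatorElement_X_Y ▸ Heisenberg.commute_Z _)
    (Heisenberg.commutatorElement_X_Y ▸ Heisenberg.commute_Z _)
    (Heisenberg.commutatorElement_X_Y ▸ Heisenberg.not_isOfFinOrder_Z)
  exact ⟨hJ, nonempty_zpowers_mulEquiv_int hJ⟩
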